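/- arXiv:1405.4844 — 4 statements merged into one kernel-verified Lean document; each statement's English description precedes it below -/
import Mathlib

section
/- Let H be a complex Hilbert space, let A be a bounded linear operator on H that is *-paranormal (i.e. ‖A*x‖² ≤ ‖A²x‖·‖x‖ for all x ∈ H), and let U be a unitary operator on H. Suppose X is a bounded linear operator on H of Hilbert–Schmidt class (i.e. for some Hilbert basis (eₙ) of H one has ∑ₙ ‖X eₙ‖² < ∞) such that A X = X U. Then A* X = X U*. -/
open ContinuousLinearMap
open scoped ENNReal InnerProductSpace

/-! For `v = X bₙ`, the *-paranormal inequality at `A v` together with `⟪A* A v, v⟫ = ‖A v‖²`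
and AM–GM gives `2‖A* A v - v‖² + 4‖A v‖² ≤ ‖A³ v‖² + ‖A v‖² + 2‖v‖²`. Since `Aᵏ X = X Uᵏ`, and
right multiplication by a unitary preserves the Hilbert–Schmidt norm (pass to adjoints and apply
Parseval twice), summing over `n` yields `2 ∑ ‖(A* A X - X) bₙ‖² + 4‖X‖₂² ≤ 4‖X‖₂²`, so
`A* A X = X`, and then `A* X = A* X U U* = A* A X U* = X U*`. The sums are taken in `ℝ≥0∞`, where
they always exist and can be interchanged. -/

def IsStarParanormal {𝕜 E : Type*} [RCLike 𝕜] [NormedAddCommGroup E] [InnerProductSpace 𝕜 E]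
    [CompleteSpace E] (A : E →L[𝕜] E) : Prop :=
  ∀ x, ‖adjoint A x‖ ^ 2 ≤ ‖A (A x)‖ * ‖x‖

section

variable {𝕜 E F : Type*} [RCLike 𝕜]
  [NormedAddCommGroup E] [InnerProductSpace 𝕜 E] [NormedAddCommGroup F] [InnerProductSpace 𝕜 F]

namespace HilbertBasis

variable {ι κ : Type*}

theorem tsum_enorm_inner_sq (b : HilbertBasis ι 𝕜 E) (x : E) :
    ∑' i, ‖⟪b i, x⟫_𝕜‖ₑ ^ 2 = ‖x‖ₑ ^ 2 := by
  have h := lp.hasSum_norm (p := 2) (by norm_num) (b.repr x)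
  simp only [ENNReal.toReal_ofNat, Real.rpow_two, b.repr_apply_apply,
    LinearIsometryEquiv.norm_map] at h
  simp only [← ofReal_norm, ← ENNReal.ofReal_pow (norm_nonneg _)]
  rw [← ENNReal.ofReal_tsum_of_nonneg (fun _ => by positivity) h.summable, h.tsum_eq]

theorem continuousLinearMap_ext (b : HilbertBasis ι 𝕜 E) {S T : E →L[𝕜] F}
    (h : ∀ i, S (b i) = T (b i)) : S = T :=
  ContinuousLinearMap.ext_on (Submodule.dense_iff_topologicalClosure_eq_top.mpr b.dense_span)
    (Set.forall_mem_range.mpr h)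

variable [CompleteSpace E] [CompleteSpace F]

theorem tsum_enorm_apply_sq_eq_adjoint (b : HilbertBasis ι 𝕜 E) (c : HilbertBasis κ 𝕜 F)
    (T : E →L[𝕜] F) : ∑' i, ‖T (b i)‖ₑ ^ 2 = ∑' j, ‖adjoint T (c j)‖ₑ ^ 2 :=
  calc ∑' i, ‖T (b i)‖ₑ ^ 2
      = ∑' i, ∑' j, ‖⟪c j, T (b i)⟫_𝕜‖ₑ ^ 2 := tsum_congr fun i => (c.tsum_enorm_inner_sq _).symm
    _ = ∑' j, ∑' i, ‖⟪c j, T (b i)⟫_𝕜‖ₑ ^ 2 := ENNReal.tsum_comm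
    _ = ∑' j, ∑' i, ‖⟪b i, adjoint T (c j)⟫_𝕜‖ₑ ^ 2 := by
      simp only [adjoint_inner_right, ← inner_conj_symm (T _), RCLike.enorm_conj]
    _ = ∑' j, ‖adjoint T (c j)‖ₑ ^ 2 := tsum_congr fun j => b.tsum_enorm_inner_sq _

theorem tsum_enorm_apply_apply_sq_of_comp_adjoint_eq_one (b : HilbertBasis ι 𝕜 E) (X : E →L[𝕜] F)
    {W : E →L[𝕜] E} (hW : W ∘L adjoint W = 1) :
    ∑' i, ‖X (W (b i))‖ₑ ^ 2 = ∑' i, ‖X (b i)‖ₑ ^ 2 := by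
  obtain ⟨_, c, -⟩ := exists_hilbertBasis 𝕜 F
  have hW' : ∀ v, ‖adjoint W v‖ = ‖v‖ :=
    (adjoint W).norm_map_iff_adjoint_comp_self.mpr (by rwa [adjoint_adjoint])
  calc ∑' i, ‖(X ∘L W) (b i)‖ₑ ^ 2
      = ∑' j, ‖adjoint W (adjoint X (c j))‖ₑ ^ 2 := by
        rw [b.tsum_enorm_apply_sq_eq_adjoint c, adjoint_comp]; rfl
    _ = ∑' j, ‖adjoint X (c j)‖ₑ ^ 2 := by simp only [← ofReal_norm, hW']
    _ = ∑' i, ‖X (b i)‖ₑ ^ 2 := (b.tsum_enorm_apply_sq_eq_adjoint c X).symm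

end HilbertBasis

namespace IsStarParanormal

variable [CompleteSpace E] {A : E →L[𝕜] E}

theorem enorm_adjoint_apply_apply_sub_sq_le (hA : IsStarParanormal A) (v : E) :
    2 * ‖adjoint A (A v) - v‖ₑ ^ 2 + 4 * ‖A v‖ₑ ^ 2 ≤
      ‖A (A (A v))‖ₑ ^ 2 + ‖A v‖ₑ ^ 2 + 2 * ‖v‖ₑ ^ 2 := by
  have hexpand : ‖adjoint A (A v) - v‖ ^ 2 = ‖adjoint A (A v)‖ ^ 2 - 2 * ‖A v‖ ^ 2 + ‖v‖ ^ 2 := by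
    rw [norm_sub_sq (𝕜 := 𝕜), adjoint_inner_left, inner_self_eq_norm_sq]
  have hpara := hA (A v)
  have hreal : 2 * ‖adjoint A (A v) - v‖ ^ 2 + 4 * ‖A v‖ ^ 2 ≤
      ‖A (A (A v))‖ ^ 2 + ‖A v‖ ^ 2 + 2 * ‖v‖ ^ 2 := by
    nlinarith [sq_nonneg (‖A (A (A v))‖ - ‖A v‖)]
  simp only [enorm_eq_nnnorm]
  exact_mod_cast hreal

theorem adjoint_comp_self_comp_eq_of_tsum_eq {ι : Type*} [CompleteSpace F]
    (hA : IsStarParanormal A) (b : HilbertBasis ι 𝕜 F) {X : F →L[𝕜] E}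
    (hX : ∑' i, ‖X (b i)‖ₑ ^ 2 ≠ ∞)
    (h1 : ∑' i, ‖A (X (b i))‖ₑ ^ 2 = ∑' i, ‖X (b i)‖ₑ ^ 2)
    (h3 : ∑' i, ‖A (A (A (X (b i))))‖ₑ ^ 2 = ∑' i, ‖X (b i)‖ₑ ^ 2) :
    adjoint A ∘L A ∘L X = X := by
  set S := ∑' i, ‖X (b i)‖ₑ ^ 2
  have hle : 2 * ∑' i, ‖adjoint A (A (X (b i))) - X (b i)‖ₑ ^ 2 + 4 * S ≤ 0 + 4 * S :=
    calc _ = ∑' i, (2 * ‖adjoint A (A (X (b i))) - X (b i)‖ₑ ^ 2 + 4 * ‖A (X (b i))‖ₑ ^ 2) := by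
          rw [ENNReal.tsum_add, ENNReal.tsum_mul_left, ENNReal.tsum_mul_left, h1]
      _ ≤ ∑' i, (‖A (A (A (X (b i))))‖ₑ ^ 2 + ‖A (X (b i))‖ₑ ^ 2 + 2 * ‖X (b i)‖ₑ ^ 2) :=
          ENNReal.tsum_le_tsum fun i => hA.enorm_adjoint_apply_apply_sub_sq_le _
      _ = 0 + 4 * S := by
          rw [ENNReal.tsum_add, ENNReal.tsum_add, ENNReal.tsum_mul_left, h1, h3]; ring
  have hzero := ENNReal.le_of_add_le_add_right (by finiteness) hle
  have hterm : ∀ i, adjoint A (A (X (b i))) - X (b i) = 0 := by simpa using hzero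
  exact b.continuousLinearMap_ext fun i => sub_eq_zero.mp (hterm i)

end IsStarParanormal

end

/-- **Putnam–Fuglede for *-paranormal operators modulo Hilbert–Schmidt class.**
If `A` is a *-paranormal operator on a complex Hilbert space `H`, `U` is unitary,
and `X` is a Hilbert–Schmidt operator with `A X = X U`, then `A* X = X U*`. -/
theorem starParanormal_putnam_fuglede
    {H : Type*} [NormedAddCommGroup H] [InnerProductSpace ℂ H] [CompleteSpace H]
    (A U X : H →L[ℂ] H)
    (hA : ∀ x : H, ‖adjoint A x‖ ^ 2 ≤ ‖A (A x)‖ * ‖x‖)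
    (hU : adjoint U ∘L U = 1 ∧ U ∘L adjoint U = 1)
    (hX : ∃ b : HilbertBasis ℕ ℂ H, Summable fun n => ‖X (b n)‖ ^ 2)
    (hAX : A ∘L X = X ∘L U) :
    adjoint A ∘L X = X ∘L adjoint U := by
  obtain ⟨b, hb⟩ := hX
  have hAX' : ∀ v, A (X v) = X (U v) := fun v => congr($hAX v)
  have hXU (T : H →L[ℂ] H) : ∑' n, ‖T (U (b n))‖ₑ ^ 2 = ∑' n, ‖T (b n)‖ₑ ^ 2 :=
    b.tsum_enorm_apply_apply_sq_of_comp_adjoint_eq_one T hU.2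
  have hAAX : adjoint A ∘L A ∘L X = X := by
    refine IsStarParanormal.adjoint_comp_self_comp_eq_of_tsum_eq hA b ?_ ?_ ?_
    · simpa only [← ofReal_norm, ← ENNReal.ofReal_pow (norm_nonneg _)] using hb.tsum_ofReal_ne_top
    · simpa only [hAX'] using hXU X
    · simp only [hAX']
      exact (hXU (X ∘L U ∘L U)).trans ((hXU (X ∘L U)).trans (hXU X))
  calc adjoint A ∘L X = adjoint A ∘L X ∘L (U ∘L adjoint U) := by rw [hU.2, one_def, comp_id]
    _ = (adjoint A ∘L A ∘L X) ∘L adjoint U := by rw [← comp_assoc X, ← hAX]; rfl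
    _ = X ∘L adjoint U := by rw [hAAX]
end

section
/- Let T be a bounded linear operator on a complex Hilbert space H that is *-paranormal (i.e. ‖T*x‖² ≤ ‖T²x‖·‖x‖ for all x ∈ H). If x ∈ H and λ ∈ ℂ satisfy T x = λ x, then T* x = conj(λ) x. -/
/-!
If `T x = λ x`, then *-paranormality at `x` gives `‖T* x‖ ≤ ‖λ‖ ‖x‖`, while
`⟪T* x, conj λ • x⟫ = ⟪x, T (conj λ • x)⟫ = ‖λ‖² ‖x‖²`. A vector `y` with `‖y‖ ≤ ‖z‖` and
`re ⟪y, z⟫ = ‖z‖²` must equal `z`, since `‖y - z‖² = ‖y‖² - ‖z‖² ≤ 0`.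
-/

open ContinuousLinearMap RCLike

section

variable {𝕜 E : Type*} [RCLike 𝕜] [NormedAddCommGroup E] [InnerProductSpace 𝕜 E]

theorem eq_of_norm_le_of_re_inner_eq_norm_sq {y z : E} (hle : ‖y‖ ≤ ‖z‖)
    (hinner : re (inner 𝕜 y z) = ‖z‖ ^ 2) : y = z := by
  have hsq : ‖y - z‖ ^ 2 ≤ 0 := by
    rw [norm_sub_sq (𝕜 := 𝕜), hinner]
    nlinarith [norm_nonneg y]
  rw [← sub_eq_zero, ← norm_eq_zero]
  exact pow_eq_zero_iff two_ne_zero |>.mp (le_antisymm hsq (sq_nonneg _))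

variable [CompleteSpace E] {T : E →L[𝕜] E} {x : E} {c : 𝕜}

theorem norm_adjoint_apply_le_of_apply_eq_smul
    (hT : ‖adjoint T x‖ ^ 2 ≤ ‖T (T x)‖ * ‖x‖) (hx : T x = c • x) :
    ‖adjoint T x‖ ≤ ‖starRingEnd 𝕜 c • x‖ := by
  have hsq : ‖adjoint T x‖ ^ 2 ≤ ‖starRingEnd 𝕜 c • x‖ ^ 2 := by
    calc ‖adjoint T x‖ ^ 2 ≤ ‖T (T x)‖ * ‖x‖ := hT
      _ = ‖starRingEnd 𝕜 c • x‖ ^ 2 := by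
        rw [hx, map_smul, hx, norm_smul, norm_smul, norm_smul, norm_conj]
        ring
  exact (sq_le_sq₀ (norm_nonneg _) (norm_nonneg _)).mp hsq

theorem inner_adjoint_apply_conj_smul_of_apply_eq_smul (hx : T x = c • x) :
    inner 𝕜 (adjoint T x) (starRingEnd 𝕜 c • x) = (‖starRingEnd 𝕜 c • x‖ ^ 2 : ℝ) := by
  rw [adjoint_inner_left, map_smul, hx, inner_smul_right, inner_smul_right,
    inner_self_eq_norm_sq_to_K, ← mul_assoc, mul_comm _ c, mul_conj, norm_smul,
    norm_conj]
  push_cast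
  ring

end

/-- If `T` is a *-paranormal operator on a complex Hilbert space and `T x = λ x`,
then `T* x = conj(λ) x`. -/
theorem starParanormal_eigenvector_adjoint
    {H : Type*} [NormedAddCommGroup H] [InnerProductSpace ℂ H] [CompleteSpace H]
    (T : H →L[ℂ] H)
    (hT : ∀ y : H, ‖adjoint T y‖ ^ 2 ≤ ‖T (T y)‖ * ‖y‖)
    (x : H) (lam : ℂ) (hx : T x = lam • x) :
    adjoint T x = (starRingEnd ℂ) lam • x := by
  refine eq_of_norm_le_of_re_inner_eq_norm_sq (𝕜 := ℂ)
    (norm_adjoint_apply_le_of_apply_eq_smul (hT x) hx) ?_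
  rw [inner_adjoint_apply_conj_smul_of_apply_eq_smul hx, ofReal_re]
end

section
/- There exists a bounded linear operator T on ℓ²(ℕ, ℂ) satisfying, for all x ∈ ℓ²(ℕ, ℂ): (Tx)₀ = x₀ + x₁, (Tx)₁ = x₁, (Tx)₂ = x₁, and (Tx)ₙ = √8 · xₙ₋₁ for all n ≥ 3; moreover this operator T is paranormal, i.e. ‖Tx‖² ≤ ‖T²x‖·‖x‖ for all x ∈ ℓ²(ℕ, ℂ). -/
/-!
Write `p = x₀`, `q = x₁` and `s = ∑ₙ |xₙ₊₂|²`. Since `T` maps the tail `(x₂, x₃, …)` to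
`(x₁, √8 x₂, √8 x₃, …)`, one gets `‖Tx‖² = |p + q|² + 2|q|² + 8s` and, applying this to `Tx`,
`‖T²x‖² = |p + 2q|² + 10|q|² + 64s`, while `‖x‖² = |p|² + |q|² + s`. Paranormality thus
becomes a polynomial inequality in `|p|`, `|q|`, `Re (p̄ q)` and `s`, which follows from
Cauchy–Schwarz `|Re (p̄ q)| ≤ |p| |q|` by a sum-of-squares argument.
-/

open scoped lp

section lpTwo

variable {α : Type*} {E : α → Type*} [∀ i, NormedAddCommGroup (E i)]

theorem memℓp_two_iff {f : ∀ i, E i} : Memℓp f 2 ↔ Summable fun i => ‖f i‖ ^ 2 := by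
  simpa using memℓp_gen_iff (p := 2) (f := f) (by norm_num)

theorem lp.norm_sq_eq_tsum (f : lp E 2) : ‖f‖ ^ 2 = ∑' i, ‖f i‖ ^ 2 := by
  simpa using lp.norm_rpow_eq_tsum (p := 2) (by norm_num) f

end lpTwo

theorem lp.norm_sq_eq_add_tsum {E : Type*} [NormedAddCommGroup E] (f : ℓ^2(ℕ, E)) :
    ‖f‖ ^ 2 = ‖f 0‖ ^ 2 + ‖f 1‖ ^ 2 + ∑' n, ‖f (n + 2)‖ ^ 2 := by
  rw [lp.norm_sq_eq_tsum, ← ((memℓp_two_iff.1 (lp.memℓp f)).sum_add_tsum_nat_add 2)]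
  simp [Finset.sum_range_succ]

/- The difference of the two sides is `(9a²b² - 4c² + 5b⁴ - 8b²c) + s (49a² - 28c + 30b²)`;
with `c² ≤ a²b²` the first bracket is at least `5c² - 8b²c + 5b⁴ ≥ 0` and the second at least
`(7a - 2b)² + 26b²`. -/
theorem paranormal_quadratic_ineq {a b c s : ℝ} (hc : |c| ≤ a * b) (hs : 0 ≤ s) :
    (a ^ 2 + 2 * c + 3 * b ^ 2 + 8 * s) ^ 2 ≤
      (a ^ 2 + 4 * c + 14 * b ^ 2 + 64 * s) * (a ^ 2 + b ^ 2 + s) := by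
  have hc' : c ^ 2 ≤ (a * b) ^ 2 := sq_le_sq' (abs_le.1 hc).1 (abs_le.1 hc).2
  have hcab : c ≤ a * b := (le_abs_self c).trans hc
  nlinarith [mul_nonneg hs (sq_nonneg (7 * a - 2 * b)), sq_nonneg (5 * c - 4 * b ^ 2),
    mul_nonneg hs (sub_nonneg.2 hcab)]

theorem paranormal_inner_product_ineq {E : Type*} [NormedAddCommGroup E] [InnerProductSpace ℝ E]
    (p q : E) {s : ℝ} (hs : 0 ≤ s) :
    (‖p + q‖ ^ 2 + 2 * ‖q‖ ^ 2 + 8 * s) ^ 2 ≤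
      (‖p + q + q‖ ^ 2 + 10 * ‖q‖ ^ 2 + 64 * s) * (‖p‖ ^ 2 + ‖q‖ ^ 2 + s) := by
  have h₁ := norm_add_sq_real p q
  have h₂ : ‖p + q + q‖ ^ 2 = ‖p‖ ^ 2 + 4 * inner ℝ p q + 4 * ‖q‖ ^ 2 := by
    rw [add_assoc, norm_add_sq_real, norm_add_sq_real q q, inner_add_right,
      real_inner_self_eq_norm_sq]
    ring
  have := paranormal_quadratic_ineq (abs_real_inner_le_norm p q) hs
  rw [h₁, h₂]
  linarith

noncomputable def shiftlikeSeq : (ℕ → ℂ) →ₗ[ℂ] ℕ → ℂ :=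
  LinearMap.pi fun n => match n with
    | 0 => LinearMap.proj (R := ℂ) (φ := fun _ : ℕ => ℂ) 0 + LinearMap.proj 1
    | 1 | 2 => LinearMap.proj 1
    | n + 3 => (Real.sqrt 8 : ℂ) • LinearMap.proj (n + 2)

section

variable (x : ℕ → ℂ)

@[simp] theorem shiftlikeSeq_apply_zero : shiftlikeSeq x 0 = x 0 + x 1 := rfl

@[simp] theorem shiftlikeSeq_apply_one : shiftlikeSeq x 1 = x 1 := rfl

@[simp] theorem shiftlikeSeq_apply_two : shiftlikeSeq x 2 = x 1 := rfl

@[simp] theorem shiftlikeSeq_apply_add_three (n : ℕ) :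
    shiftlikeSeq x (n + 3) = Real.sqrt 8 * x (n + 2) := rfl

end

theorem norm_sqrt_eight_mul_sq (z : ℂ) : ‖(Real.sqrt 8 : ℂ) * z‖ ^ 2 = 8 * ‖z‖ ^ 2 := by
  simp [mul_pow]

theorem hasSum_norm_sq_shiftlikeSeq_tail {x : ℕ → ℂ} (hx : Summable fun n => ‖x n‖ ^ 2) :
    HasSum (fun n => ‖shiftlikeSeq x (n + 2)‖ ^ 2) (‖x 1‖ ^ 2 + 8 * ∑' n, ‖x (n + 2)‖ ^ 2) := by
  have h : HasSum (fun n => ‖shiftlikeSeq x (n + 1 + 2)‖ ^ 2) (8 * ∑' n, ‖x (n + 2)‖ ^ 2) := by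
    simp only [shiftlikeSeq_apply_add_three, norm_sqrt_eight_mul_sq]
    exact ((summable_nat_add_iff 2).2 hx).hasSum.mul_left 8
  rw [add_comm]
  simpa using (hasSum_nat_add_iff (f := fun n => ‖shiftlikeSeq x (n + 2)‖ ^ 2) 1).1 h

theorem memℓp_shiftlikeSeq (x : ℓ^2(ℕ, ℂ)) : Memℓp (shiftlikeSeq x) 2 :=
  memℓp_two_iff.2 <| (summable_nat_add_iff 2).1
    (hasSum_norm_sq_shiftlikeSeq_tail (memℓp_two_iff.1 (lp.memℓp x))).summable

noncomputable def shiftlikeₗ : ℓ^2(ℕ, ℂ) →ₗ[ℂ] ℓ^2(ℕ, ℂ) where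
  toFun x := ⟨shiftlikeSeq x, memℓp_shiftlikeSeq x⟩
  map_add' x y := Subtype.ext (map_add shiftlikeSeq ⇑x ⇑y)
  map_smul' c x := Subtype.ext (map_smul shiftlikeSeq c ⇑x)

theorem shiftlikeₗ_apply (x : ℓ^2(ℕ, ℂ)) (n : ℕ) : shiftlikeₗ x n = shiftlikeSeq x n := rfl

theorem tsum_norm_sq_shiftlikeₗ_tail (x : ℓ^2(ℕ, ℂ)) :
    ∑' n, ‖shiftlikeₗ x (n + 2)‖ ^ 2 = ‖x 1‖ ^ 2 + 8 * ∑' n, ‖x (n + 2)‖ ^ 2 :=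
  (hasSum_norm_sq_shiftlikeSeq_tail (memℓp_two_iff.1 (lp.memℓp x))).tsum_eq

theorem norm_sq_shiftlikeₗ (x : ℓ^2(ℕ, ℂ)) :
    ‖shiftlikeₗ x‖ ^ 2 = ‖x 0 + x 1‖ ^ 2 + 2 * ‖x 1‖ ^ 2 + 8 * ∑' n, ‖x (n + 2)‖ ^ 2 := by
  rw [lp.norm_sq_eq_add_tsum, tsum_norm_sq_shiftlikeₗ_tail, shiftlikeₗ_apply, shiftlikeₗ_apply,
    shiftlikeSeq_apply_zero, shiftlikeSeq_apply_one]
  ring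

theorem norm_shiftlikeₗ_le (x : ℓ^2(ℕ, ℂ)) : ‖shiftlikeₗ x‖ ≤ 3 * ‖x‖ := by
  refine le_of_sq_le_sq ?_ (by positivity)
  have hs : 0 ≤ ∑' n, ‖x (n + 2)‖ ^ 2 := tsum_nonneg fun n => sq_nonneg _
  rw [mul_pow, norm_sq_shiftlikeₗ, lp.norm_sq_eq_add_tsum]
  nlinarith [norm_add_le (x 0) (x 1), norm_nonneg (x 0 + x 1), sq_nonneg (‖x 0‖ - ‖x 1‖)]

noncomputable def shiftlike : ℓ^2(ℕ, ℂ) →L[ℂ] ℓ^2(ℕ, ℂ) :=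
  shiftlikeₗ.mkContinuous 3 norm_shiftlikeₗ_le

theorem shiftlike_apply (x : ℓ^2(ℕ, ℂ)) (n : ℕ) : shiftlike x n = shiftlikeSeq x n := rfl

theorem norm_sq_shiftlike (x : ℓ^2(ℕ, ℂ)) :
    ‖shiftlike x‖ ^ 2 = ‖x 0 + x 1‖ ^ 2 + 2 * ‖x 1‖ ^ 2 + 8 * ∑' n, ‖x (n + 2)‖ ^ 2 :=
  norm_sq_shiftlikeₗ x

theorem norm_sq_shiftlike_shiftlike (x : ℓ^2(ℕ, ℂ)) :
    ‖shiftlike (shiftlike x)‖ ^ 2 =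
      ‖x 0 + x 1 + x 1‖ ^ 2 + 10 * ‖x 1‖ ^ 2 + 64 * ∑' n, ‖x (n + 2)‖ ^ 2 := by
  rw [norm_sq_shiftlike, shiftlike_apply, shiftlike_apply, shiftlikeSeq_apply_zero,
    shiftlikeSeq_apply_one]
  have htail : ∑' n, ‖shiftlike x (n + 2)‖ ^ 2 = ‖x 1‖ ^ 2 + 8 * ∑' n, ‖x (n + 2)‖ ^ 2 :=
    tsum_norm_sq_shiftlikeₗ_tail x
  rw [htail]
  ring

theorem shiftlike_paranormal (x : ℓ^2(ℕ, ℂ)) :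
    ‖shiftlike x‖ ^ 2 ≤ ‖shiftlike (shiftlike x)‖ * ‖x‖ := by
  refine le_of_sq_le_sq ?_ (by positivity)
  rw [mul_pow, norm_sq_shiftlike, norm_sq_shiftlike_shiftlike, lp.norm_sq_eq_add_tsum]
  exact paranormal_inner_product_ineq (x 0) (x 1) (tsum_nonneg fun n => sq_nonneg _)

/-- There exists a bounded operator `T` on `ℓ²(ℕ, ℂ)` with
`(Tx)₀ = x₀ + x₁`, `(Tx)₁ = x₁`, `(Tx)₂ = x₁` and `(Tx)ₙ = √8 · xₙ₋₁` for `n ≥ 3`,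
and this operator is paranormal: `‖Tx‖² ≤ ‖T²x‖·‖x‖` for all `x`. -/
theorem exists_paranormal_shiftlike :
    ∃ T : lp (fun _ : ℕ => ℂ) 2 →L[ℂ] lp (fun _ : ℕ => ℂ) 2,
      (∀ x : lp (fun _ : ℕ => ℂ) 2,
        (T x) 0 = x 0 + x 1 ∧ (T x) 1 = x 1 ∧ (T x) 2 = x 1 ∧
        ∀ n : ℕ, 3 ≤ n → (T x) n = (Real.sqrt 8 : ℂ) * x (n - 1)) ∧
      ∀ x : lp (fun _ : ℕ => ℂ) 2, ‖T x‖ ^ 2 ≤ ‖T (T x)‖ * ‖x‖ := by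
  refine ⟨shiftlike, fun x => ⟨rfl, rfl, rfl, fun n hn => ?_⟩, shiftlike_paranormal⟩
  obtain ⟨m, rfl⟩ := Nat.exists_eq_add_of_le' hn
  rfl
end

section
/- There exist a complex Hilbert space H, a paranormal bounded linear operator T on H, a nonzero vector x ∈ H, and a scalar λ ∈ ℂ such that T x = λ x but T* x ≠ conj(λ) x. In other words, the eigenvector property of *-paranormal operators (eigenvectors of T for λ are eigenvectors of T* for conj(λ)) fails for paranormal operators. -/
open ContinuousLinearMap

/-!
On `ℓ²(ℕ)` let `T e₀ = 0`, `T e₁ = e₀ + e₂` and `T eₙ = 2 eₙ₊₁` for `n ≥ 2`. Writing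
`a = |x₁|²` and `s = ∑_{n ≥ 2} |xₙ|²`, one finds `‖T x‖² = 2a + 4s`, `‖T² x‖² = 4a + 16s` and
`a + s ≤ ‖x‖²`, so paranormality reduces to `(2a + 4s)² ≤ (4a + 16s)(a + s)`. Yet `T e₀ = 0`
while `⟪T* e₀, e₁⟫ = ⟪e₀, e₀ + e₂⟫ = 1`.
-/

namespace ParanormalCounterexample

abbrev ℓ2 : Type := lp (fun _ : ℕ => ℂ) 2

noncomputable def tailNormSq (x : ℕ → ℂ) : ℝ := ∑' n, ‖x (n + 2)‖ ^ 2

lemma tailNormSq_nonneg (x : ℕ → ℂ) : 0 ≤ tailNormSq x :=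
  tsum_nonneg fun _ => sq_nonneg _

lemma hasSum_norm_sq (x : ℓ2) : HasSum (fun n => ‖x n‖ ^ 2) (‖x‖ ^ 2) := by
  simpa using lp.hasSum_norm (p := 2) (by norm_num) x

lemma norm_sq_eq (x : ℓ2) : ‖x‖ ^ 2 = ‖x 0‖ ^ 2 + ‖x 1‖ ^ 2 + tailNormSq x := by
  rw [(hasSum_norm_sq x).tsum_eq.symm, ← (hasSum_norm_sq x).summable.sum_add_tsum_nat_add 2,
    Finset.sum_range_succ, Finset.sum_range_one, tailNormSq]

lemma summable_tail (x : ℓ2) : Summable fun n => ‖x (n + 2)‖ ^ 2 :=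
  (summable_nat_add_iff 2).2 (hasSum_norm_sq x).summable

def opCoord : ℕ → (ℕ → ℂ) →ₗ[ℂ] ℂ
  | 0 => LinearMap.proj 1
  | 1 => 0
  | 2 => LinearMap.proj 1
  | n + 3 => (2 : ℂ) • LinearMap.proj (n + 2)

def opFun : (ℕ → ℂ) →ₗ[ℂ] (ℕ → ℂ) := LinearMap.pi opCoord

lemma hasSum_tail_opFun {x : ℕ → ℂ} (hx : Summable fun n => ‖x (n + 2)‖ ^ 2) :
    HasSum (fun n => ‖opFun x (n + 2)‖ ^ 2) (‖x 1‖ ^ 2 + 4 * tailNormSq x) := by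
  have h : HasSum (fun n => ‖opFun x (n + 3)‖ ^ 2) (4 * tailNormSq x) := by
    have : (fun n => ‖opFun x (n + 3)‖ ^ 2) = fun n => 4 * ‖x (n + 2)‖ ^ 2 := by
      funext n
      show ‖2 * x (n + 2)‖ ^ 2 = _
      rw [norm_mul, mul_pow]
      norm_num
    rw [this]
    exact hx.hasSum.mul_left 4
  have := (hasSum_nat_add_iff (f := fun n => ‖opFun x (n + 2)‖ ^ 2) 1).1 h
  rwa [Finset.sum_range_one, add_comm] at this

lemma memℓp_opFun (x : ℓ2) : Memℓp (opFun x) 2 := by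
  refine memℓp_gen ?_
  have := (hasSum_nat_add_iff (f := fun n => ‖opFun x n‖ ^ 2) 2).1
    (hasSum_tail_opFun (summable_tail x))
  simpa using this.summable

def opₗ : ℓ2 →ₗ[ℂ] ℓ2 where
  toFun x := ⟨opFun x, memℓp_opFun x⟩
  map_add' x y := Subtype.ext (map_add opFun (x : ℕ → ℂ) y)
  map_smul' c x := Subtype.ext (map_smul opFun c (x : ℕ → ℂ))

lemma tailNormSq_opₗ (x : ℓ2) : tailNormSq (opₗ x) = ‖x 1‖ ^ 2 + 4 * tailNormSq x :=
  (hasSum_tail_opFun (summable_tail x)).tsum_eq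

lemma norm_sq_opₗ (x : ℓ2) : ‖opₗ x‖ ^ 2 = 2 * ‖x 1‖ ^ 2 + 4 * tailNormSq x := by
  have h0 : opₗ x 0 = x 1 := rfl
  have h1 : opₗ x 1 = 0 := rfl
  rw [norm_sq_eq, tailNormSq_opₗ, h0, h1, norm_zero]
  ring

noncomputable def op : ℓ2 →L[ℂ] ℓ2 :=
  opₗ.mkContinuous 2 fun x => by
    refine (pow_le_pow_iff_left₀ (norm_nonneg _) (by positivity) two_ne_zero).1 ?_
    rw [norm_sq_opₗ, mul_pow, norm_sq_eq]
    nlinarith [sq_nonneg ‖x 0‖, tailNormSq_nonneg x]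

lemma op_apply_one (x : ℓ2) : op x 1 = 0 := rfl

lemma tailNormSq_op (x : ℓ2) : tailNormSq (op x) = ‖x 1‖ ^ 2 + 4 * tailNormSq x :=
  tailNormSq_opₗ x

lemma norm_sq_op (x : ℓ2) : ‖op x‖ ^ 2 = 2 * ‖x 1‖ ^ 2 + 4 * tailNormSq x :=
  norm_sq_opₗ x

lemma norm_op_sq_le (x : ℓ2) : ‖op x‖ ^ 2 ≤ ‖op (op x)‖ * ‖x‖ := by
  set a := ‖x 1‖ ^ 2
  set s := tailNormSq x
  have hTTx : ‖op (op x)‖ ^ 2 = 4 * a + 16 * s := by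
    rw [norm_sq_op, op_apply_one, tailNormSq_op, norm_zero]
    ring
  have hx : a + s ≤ ‖x‖ ^ 2 := by
    rw [norm_sq_eq]
    linarith [sq_nonneg ‖x 0‖]
  have ha : 0 ≤ a := sq_nonneg _
  have hs : 0 ≤ s := tailNormSq_nonneg x
  refine (pow_le_pow_iff_left₀ (by positivity) (by positivity) two_ne_zero).1 ?_
  calc (‖op x‖ ^ 2) ^ 2 = (2 * a + 4 * s) ^ 2 := by rw [norm_sq_op]
    _ ≤ (4 * a + 16 * s) * (a + s) := by nlinarith [mul_nonneg ha hs]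
    _ ≤ ‖op (op x)‖ ^ 2 * ‖x‖ ^ 2 := by rw [hTTx]; gcongr
    _ = (‖op (op x)‖ * ‖x‖) ^ 2 := by ring

lemma op_single_zero : op (lp.single 2 0 1) = 0 := by
  ext n
  rcases n with _ | _ | _ | n <;> simp [op, opₗ, opFun, opCoord, lp.single_apply]

lemma inner_single_zero_op_single_one :
    inner ℂ (lp.single 2 0 (1 : ℂ) : ℓ2) (op (lp.single 2 1 1)) = 1 := by
  rw [lp.inner_single_left]
  simp [op, opₗ, opFun, opCoord, lp.single_apply]

lemma adjoint_op_single_zero_ne_zero : adjoint op (lp.single 2 0 1) ≠ 0 := by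
  intro h
  have := adjoint_inner_left op (lp.single 2 1 1) (lp.single 2 0 1)
  rw [h, inner_zero_left, inner_single_zero_op_single_one] at this
  exact zero_ne_one this

end ParanormalCounterexample

open ParanormalCounterexample

/-- The eigenvector property of *-paranormal operators fails for paranormal operators:
there exist a complex Hilbert space `H`, a paranormal operator `T`, a nonzero vector `x`
and a scalar `λ` with `T x = λ x` but `T* x ≠ conj(λ) x`. -/
theorem paranormal_eigenvector_adjoint_fails :
    ∃ (H : Type) (_ : NormedAddCommGroup H) (_ : InnerProductSpace ℂ H)
      (_ : CompleteSpace H) (T : H →L[ℂ] H) (x : H) (lam : ℂ),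
      (∀ y : H, ‖T y‖ ^ 2 ≤ ‖T (T y)‖ * ‖y‖) ∧
      x ≠ 0 ∧ T x = lam • x ∧ adjoint T x ≠ (starRingEnd ℂ) lam • x := by
  refine ⟨ℓ2, inferInstance, inferInstance, inferInstance, op, lp.single 2 0 1, 0,
    norm_op_sq_le, ?_, ?_, ?_⟩
  · exact norm_ne_zero_iff.1 (by simp [lp.norm_single])
  · simpa using op_single_zero
  · simpa using adjoint_op_single_zero_ne_zero
end
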